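/- arXiv:2403.14704 — 4 statements merged into one kernel-verified Lean document; each statement's English description precedes it below -/
import Mathlib

section
/- Downward validity lemma for standard formulas: let γ ∨ (⋀_{i∈N} ⟨A_i⟩φ_i → ⋁_{j∈P} ⟨B_j⟩ψ_j) be a standard formula, and assume it is MCL-valid. Then at least one of the following holds: (a) γ is MCL-valid; (b) there exist i ∈ N and j ∈ P such that A_i ⊆ B_j and the formula (φ_{N0} ∧ φ_i) → ψ_j is MCL-valid, where N0 = {i ∈ N | A_i = ∅} and φ_{N0} = ⋀{φ_i | i ∈ N0}. -/
open scoped Classical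

/-- A joint action of a coalition `A`: an assignment of an action to each agent in `A`. -/
def JA (Agent Action : Type) (A : Set Agent) : Type :=
  (a : Agent) → a ∈ A → Action

namespace JA

variable {Agent Action : Type}

/-- The restriction `σ|_B` of a joint action of `A` to a subcoalition `B ⊆ A`. -/
def restrict {A B : Set Agent} (h : B ⊆ A) (σ : JA Agent Action A) : JA Agent Action B :=
  fun a ha => σ a (h ha)

/-- The union `σ_A ∪ σ_B` of joint actions of coalitions `A` and `B`. -/
noncomputable def union {A B : Set Agent} (σA : JA Agent Action A) (σB : JA Agent Action B) :
    JA Agent Action (A ∪ B) :=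
  fun a ha =>
    if h : a ∈ A then σA a h else σB a ((show a ∈ A ∨ a ∈ B from ha).resolve_left h)

/-- Transport of a joint action along an equality of coalitions. -/
def cast {A B : Set Agent} (h : A = B) (σ : JA Agent Action A) : JA Agent Action B :=
  fun a ha => σ a (by rw [h]; exact ha)

end JA

/-- An abstract multi-agent action model. -/
structure AMAM (Agent AP : Type) : Type 1 where
  State : Type
  Action : Type
  state_nonempty : Nonempty State
  action_nonempty : Nonempty Action
  av : (A : Set Agent) → State → Set (JA Agent Action A)
  out : (A : Set Agent) → State → JA Agent Action A → Set State
  lab : State → Set AP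

/-- `⊕{Sa(a) | a ∈ A}`: merge of a family of sets of joint actions of singleton coalitions,
indexed by the agents in `A`: the set of joint actions of `A` obtained as unions `⋃_{a∈A} f(a)`
over choice functions `f` with `f(a) ∈ Sa(a)`. -/
def oplusSingle {Agent Action : Type} (A : Set Agent)
    (Sa : (a : Agent) → Set (JA Agent Action ({a} : Set Agent))) :
    Set (JA Agent Action A) :=
  {σ | ∃ f : (a : Agent) → a ∈ A → JA Agent Action ({a} : Set Agent),
        (∀ (a : Agent) (ha : a ∈ A), f a ha ∈ Sa a) ∧
        (∀ (a : Agent) (ha : a ∈ A), σ a ha = f a ha a rfl)}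

/-- A concurrent game model. -/
structure IsCGM {Agent AP : Type} (M : AMAM Agent AP) : Prop where
  av_agent_nonempty : ∀ (a : Agent) (s : M.State), (M.av {a} s).Nonempty
  av_oplus : ∀ (A : Set Agent) (s : M.State),
    M.av A s = oplusSingle A (fun a => M.av {a} s)
  out_det : ∀ (s : M.State) (σ : JA Agent M.Action (Set.univ : Set Agent)),
    (σ ∈ M.av Set.univ s → ∃ t : M.State, M.out Set.univ s σ = {t}) ∧
    (σ ∉ M.av Set.univ s → M.out Set.univ s σ = ∅)
  out_union : ∀ (A : Set Agent) (s : M.State) (σ : JA Agent M.Action A),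
    M.out A s σ = {t | ∃ σG : JA Agent M.Action (Set.univ : Set Agent),
      JA.restrict (Set.subset_univ A) σG = σ ∧ t ∈ M.out Set.univ s σG}

/-- A general concurrent game model. -/
structure IsGCGM {Agent AP : Type} (M : AMAM Agent AP) : Prop where
  av_restrict : ∀ (A : Set Agent) (s : M.State),
    M.av A s = {σ | ∃ σG ∈ M.av Set.univ s, JA.restrict (Set.subset_univ A) σG = σ}
  av_grand : ∀ s : M.State,
    M.av Set.univ s = {σ | M.out Set.univ s σ ≠ ∅}
  out_union : ∀ (A : Set Agent) (s : M.State) (σ : JA Agent M.Action A),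
    M.out A s σ = {t | ∃ σG : JA Agent M.Action (Set.univ : Set Agent),
      JA.restrict (Set.subset_univ A) σG = σ ∧ t ∈ M.out Set.univ s σG}

/-- The language `Φ` of coalition logic. -/
inductive Formula (Agent AP : Type) : Type
  | top : Formula Agent AP
  | atom : AP → Formula Agent AP
  | neg : Formula Agent AP → Formula Agent AP
  | and : Formula Agent AP → Formula Agent AP → Formula Agent AP
  | coal : Set Agent → Formula Agent AP → Formula Agent AP

namespace Formula

variable {Agent AP : Type}

def bot : Formula Agent AP := .neg .top
def or (φ ψ : Formula Agent AP) : Formula Agent AP := .neg ((φ.neg).and (ψ.neg))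
def imp (φ ψ : Formula Agent AP) : Formula Agent AP := (φ.neg).or ψ
def iff (φ ψ : Formula Agent AP) : Formula Agent AP := (φ.imp ψ).and (ψ.imp φ)

/-- Modal depth. -/
def mdepth : Formula Agent AP → ℕ
  | .top => 0
  | .atom _ => 0
  | .neg φ => φ.mdepth
  | .and φ ψ => max φ.mdepth ψ.mdepth
  | .coal _ φ => φ.mdepth + 1

end Formula

/-- Satisfaction of a formula at a state of an abstract multi-agent action model. -/
def Sat {Agent AP : Type} (M : AMAM Agent AP) : M.State → Formula Agent AP → Prop
  | _, .top => True
  | s, .atom p => p ∈ M.lab s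
  | s, .neg φ => ¬ Sat M s φ
  | s, .and φ ψ => Sat M s φ ∧ Sat M s ψ
  | s, .coal A φ => ∃ σ ∈ M.av A s, ∀ t ∈ M.out A s σ, Sat M t φ

/-- CL-validity: truth at every state of every concurrent game model. -/
def CLValid {Agent AP : Type} (φ : Formula Agent AP) : Prop :=
  ∀ M : AMAM Agent AP, IsCGM M → ∀ s : M.State, Sat M s φ

/-- MCL-validity: truth at every state of every general concurrent game model. -/
def MCLValid {Agent AP : Type} (φ : Formula Agent AP) : Prop :=
  ∀ M : AMAM Agent AP, IsGCGM M → ∀ s : M.State, Sat M s φ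

/-- Propositional evaluation of a formula under a valuation, treating coalition
formulas (and atoms) as propositional atoms. -/
def propEval {Agent AP : Type} (v : Formula Agent AP → Bool) : Formula Agent AP → Bool
  | .top => true
  | .atom p => v (.atom p)
  | .neg φ => !(propEval v φ)
  | .and φ ψ => propEval v φ && propEval v ψ
  | .coal A φ => v (.coal A φ)

/-- `φ` is (an instance of) a propositional tautology. -/
def Tautology {Agent AP : Type} (φ : Formula Agent AP) : Prop :=
  ∀ v : Formula Agent AP → Bool, propEval v φ = true

/-- `φ` is propositionally satisfiable. -/
def PropSatisfiable {Agent AP : Type} (φ : Formula Agent AP) : Prop :=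
  ∃ v : Formula Agent AP → Bool, propEval v φ = true

/-- Pauly's axiomatic system for Coalition Logic CL. -/
inductive PaulyCL {Agent AP : Type} : Formula Agent AP → Prop
  | tau {φ : Formula Agent AP} : Tautology φ → PaulyCL φ
  | mon (A : Set Agent) (φ ψ : Formula Agent AP) :
      PaulyCL ((Formula.coal A (φ.and ψ)).imp (Formula.coal A φ))
  | live (A : Set Agent) : PaulyCL ((Formula.coal A Formula.bot).neg)
  | ser (A : Set Agent) : PaulyCL (Formula.coal A Formula.top)
  | ia {A B : Set Agent} (h : A ∩ B = ∅) (φ ψ : Formula Agent AP) :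
      PaulyCL (((Formula.coal A φ).and (Formula.coal B ψ)).imp
        (Formula.coal (A ∪ B) (φ.and ψ)))
  | max (φ : Formula Agent AP) :
      PaulyCL (((Formula.coal ∅ φ.neg).neg).imp (Formula.coal Set.univ φ))
  | mp {φ ψ : Formula Agent AP} : PaulyCL (φ.imp ψ) → PaulyCL φ → PaulyCL ψ
  | re {φ ψ : Formula Agent AP} (A : Set Agent) :
      PaulyCL (φ.iff ψ) → PaulyCL ((Formula.coal A φ).iff (Formula.coal A ψ))

/-- The alternative axiomatic system for Coalition Logic CL. -/
inductive AltCL {Agent AP : Type} : Formula Agent AP → Prop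
  | tau {φ : Formula Agent AP} : Tautology φ → AltCL φ
  | mg (A : Set Agent) (φ ψ : Formula Agent AP) :
      AltCL ((Formula.coal ∅ (φ.imp ψ)).imp ((Formula.coal A φ).imp (Formula.coal A ψ)))
  | mc {A B : Set Agent} (h : A ⊆ B) (φ : Formula Agent AP) :
      AltCL ((Formula.coal A φ).imp (Formula.coal B φ))
  | live (A : Set Agent) : AltCL ((Formula.coal A Formula.bot).neg)
  | ser (A : Set Agent) : AltCL (Formula.coal A Formula.top)
  | ia {A B : Set Agent} (h : A ∩ B = ∅) (φ ψ : Formula Agent AP) :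
      AltCL (((Formula.coal A φ).and (Formula.coal B ψ)).imp
        (Formula.coal (A ∪ B) (φ.and ψ)))
  | det (A : Set Agent) (φ ψ : Formula Agent AP) :
      AltCL ((Formula.coal A (φ.or ψ)).imp ((Formula.coal A φ).or (Formula.coal Set.univ ψ)))
  | mp {φ ψ : Formula Agent AP} : AltCL (φ.imp ψ) → AltCL φ → AltCL ψ
  | cn {φ : Formula Agent AP} (A : Set Agent) (ψ : Formula Agent AP) :
      AltCL φ → AltCL ((Formula.coal A ψ).imp (Formula.coal ∅ φ))

/-- The axiomatic system for Minimal Coalition Logic MCL. -/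
inductive MCLProv {Agent AP : Type} : Formula Agent AP → Prop
  | tau {φ : Formula Agent AP} : Tautology φ → MCLProv φ
  | mg (A : Set Agent) (φ ψ : Formula Agent AP) :
      MCLProv ((Formula.coal ∅ (φ.imp ψ)).imp ((Formula.coal A φ).imp (Formula.coal A ψ)))
  | mc {A B : Set Agent} (h : A ⊆ B) (φ : Formula Agent AP) :
      MCLProv ((Formula.coal A φ).imp (Formula.coal B φ))
  | live (A : Set Agent) : MCLProv ((Formula.coal A Formula.bot).neg)
  | mp {φ ψ : Formula Agent AP} : MCLProv (φ.imp ψ) → MCLProv φ → MCLProv ψ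
  | cn {φ : Formula Agent AP} (A : Set Agent) (ψ : Formula Agent AP) :
      MCLProv φ → MCLProv ((Formula.coal A ψ).imp (Formula.coal ∅ φ))

/-- Literals of classical propositional logic. -/
inductive IsLiteral {Agent AP : Type} : Formula Agent AP → Prop
  | pos (p : AP) : IsLiteral (Formula.atom p)
  | neg (p : AP) : IsLiteral ((Formula.atom p).neg)

/-- Elementary disjunctions: disjunctions of (possibly zero) literals. -/
inductive IsElemDisj {Agent AP : Type} : Formula Agent AP → Prop
  | bot : IsElemDisj Formula.bot
  | lit {φ : Formula Agent AP} : IsLiteral φ → IsElemDisj φ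
  | disj {φ ψ : Formula Agent AP} : IsElemDisj φ → IsElemDisj ψ → IsElemDisj (φ.or ψ)

/-- Elementary conjunctions: conjunctions of (possibly zero) literals. -/
inductive IsElemConj {Agent AP : Type} : Formula Agent AP → Prop
  | top : IsElemConj Formula.top
  | lit {φ : Formula Agent AP} : IsLiteral φ → IsElemConj φ
  | conj {φ ψ : Formula Agent AP} : IsElemConj φ → IsElemConj ψ → IsElemConj (φ.and ψ)

/-- Conjunction of a list of formulas. -/
def bigAnd {Agent AP : Type} : List (Formula Agent AP) → Formula Agent AP
  | [] => Formula.top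
  | [φ] => φ
  | φ :: l => φ.and (bigAnd l)

/-- Disjunction of a list of formulas. -/
def bigOr {Agent AP : Type} : List (Formula Agent AP) → Formula Agent AP
  | [] => Formula.bot
  | [φ] => φ
  | φ :: l => φ.or (bigOr l)

/-- The data of a standard formula
`γ ∨ (⋀_{i∈N} ⟨A_i⟩φ_i → ⋁_{j∈P} ⟨B_j⟩ψ_j)`. -/
structure StdFormula (Agent AP : Type) where
  γ : Formula Agent AP
  hγ : IsElemDisj γ
  n : ℕ
  m : ℕ
  hm : 0 < m
  A : Fin n → Set Agent
  φ : Fin n → Formula Agent AP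
  B : Fin m → Set Agent
  ψ : Fin m → Formula Agent AP
  hN : n ≠ 0 → ∃ i : Fin n, A i = (∅ : Set Agent) ∧ φ i = Formula.top
  hP : ∃ j : Fin m, B j = (Set.univ : Set Agent) ∧ ψ j = Formula.bot

/-- The standard formula determined by the data. -/
def StdFormula.toFormula {Agent AP : Type} (S : StdFormula Agent AP) : Formula Agent AP :=
  S.γ.or ((bigAnd (List.ofFn fun i => Formula.coal (S.A i) (S.φ i))).imp
      (bigOr (List.ofFn fun j => Formula.coal (S.B j) (S.ψ j))))

/-- `φ_{N0} = ⋀{φ_i | i ∈ N, A_i = ∅}`. -/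
noncomputable def StdFormula.phiN0 {Agent AP : Type} (S : StdFormula Agent AP) :
    Formula Agent AP :=
  bigAnd (((List.finRange S.n).filter fun i => decide (S.A i = (∅ : Set Agent))).map S.φ)

/-- The atomic propositions that are conjuncts of a formula. -/
def posAtoms {Agent AP : Type} : Formula Agent AP → Set AP
  | .atom p => {p}
  | .and φ ψ => posAtoms φ ∪ posAtoms ψ
  | _ => ∅

/-- A general game form with outcome states indexed by `ι`. -/
structure GameForm (Agent ι : Type) : Type 1 where
  Action0 : Type
  action_nonempty : Nonempty Action0
  outcome_nonempty : Nonempty ι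
  av0 : (A : Set Agent) → Set (JA Agent Action0 A)
  out0 : (A : Set Agent) → JA Agent Action0 A → Set ι
  av0_restrict : ∀ A : Set Agent,
    av0 A = {σ | ∃ σG ∈ av0 Set.univ, JA.restrict (Set.subset_univ A) σG = σ}
  av0_out : ∀ σ : JA Agent Action0 (Set.univ : Set Agent),
    σ ∈ av0 Set.univ ↔ out0 Set.univ σ ≠ ∅
  out0_union : ∀ (A : Set Agent) (σ : JA Agent Action0 A),
    out0 A σ = {j | ∃ σG : JA Agent Action0 (Set.univ : Set Agent),
      JA.restrict (Set.subset_univ A) σG = σ ∧ j ∈ out0 Set.univ σG}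

/-- The model grafted from a family of pointed models `(Mi i, si i)`, an elementary
conjunction `γ`, and a general game form `F`.  The new state `s_0` is `none`; the states
of `Mi i` are embedded as `some ⟨i, ·⟩`; the actions of `F` and of the `Mi i` are kept
disjoint via a sum type. -/
noncomputable def grafted {Agent AP ι : Type}
    (Mi : ι → AMAM Agent AP) (si : (i : ι) → (Mi i).State)
    (γ : Formula Agent AP) (F : GameForm Agent ι) : AMAM Agent AP where
  State := Option ((i : ι) × (Mi i).State)
  Action := F.Action0 ⊕ ((i : ι) × (Mi i).Action)
  state_nonempty := ⟨none⟩
  action_nonempty := ⟨Sum.inl (Classical.choice F.action_nonempty)⟩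
  av := fun A s =>
    match s with
    | none => {σ | ∃ τ ∈ F.av0 A, σ = fun a ha => Sum.inl (τ a ha)}
    | some ⟨i, u⟩ => {σ | ∃ τ ∈ (Mi i).av A u, σ = fun a ha => Sum.inr ⟨i, τ a ha⟩}
  out := fun A s σ =>
    match s with
    | none => {t | ∃ τ : JA Agent F.Action0 A,
        (σ = fun a ha => Sum.inl (τ a ha)) ∧ ∃ j ∈ F.out0 A τ, t = some ⟨j, si j⟩}
    | some ⟨i, u⟩ => {t | ∃ τ : JA Agent (Mi i).Action A,
        (σ = fun a ha => Sum.inr ⟨i, τ a ha⟩) ∧ ∃ u' ∈ (Mi i).out A u τ, t = some ⟨i, u'⟩}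
  lab := fun s =>
    match s with
    | none => posAtoms γ
    | some ⟨i, u⟩ => (Mi i).lab u

/-!
Suppose `γ` fails at some state and, for every pair `(i, j)` with `A i ⊆ B j`, the formula
`φ_{N0} ∧ φ i ∧ ¬ψ j` holds at some state of some model. Graft these pointed models below a new
root at which `γ` fails. At the root every agent votes for an index `i` or abstains, and the
outcomes of a vote profile are the pairs `(i, j)` such that `i = i'` whenever the nonempty
coalition `A i'` votes unanimously for `i'`. Voting for `i`, the coalition `A i` forces `φ i`
(when `A i = ∅`, every outcome satisfies `φ_{N0}`), so by validity some `⟨B j⟩ψ j` holds at the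
root. But if the agents outside `B j` abstain, the unanimously voting nonempty coalitions lie
inside `B j` and all carry one index `i` (or there are none, and `i` is the index with
`A i = ∅`), so `(i, j)` is an outcome at which `ψ j` fails.
-/

open Function

section Semantics

variable {Agent AP : Type} {M : AMAM Agent AP} {s : M.State}

theorem sat_or {φ ψ : Formula Agent AP} : Sat M s (φ.or ψ) ↔ Sat M s φ ∨ Sat M s ψ := by
  simp only [Formula.or, Sat]
  tauto

theorem sat_imp {φ ψ : Formula Agent AP} : Sat M s (φ.imp ψ) ↔ (Sat M s φ → Sat M s ψ) := by
  simp only [Formula.imp, sat_or, Sat]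
  tauto

theorem sat_bigAnd {l : List (Formula Agent AP)} : Sat M s (bigAnd l) ↔ ∀ φ ∈ l, Sat M s φ := by
  induction l with
  | nil => simp [bigAnd, Sat]
  | cons φ l ih =>
    cases l with
    | nil => simp [bigAnd]
    | cons ψ l => simp [bigAnd, Sat, ih]

theorem sat_bigOr {l : List (Formula Agent AP)} : Sat M s (bigOr l) ↔ ∃ φ ∈ l, Sat M s φ := by
  induction l with
  | nil => simp [bigOr, Formula.bot, Sat]
  | cons φ l ih =>
    cases l with
    | nil => simp [bigOr]
    | cons ψ l => simp [bigOr, sat_or, ih]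

theorem StdFormula.sat_toFormula (S : StdFormula Agent AP) :
    Sat M s S.toFormula ↔ Sat M s S.γ ∨
      ((∀ i, Sat M s (.coal (S.A i) (S.φ i))) → ∃ j, Sat M s (.coal (S.B j) (S.ψ j))) := by
  simp [StdFormula.toFormula, sat_or, sat_imp, sat_bigAnd, sat_bigOr]

theorem StdFormula.sat_φ_of_sat_phiN0 (S : StdFormula Agent AP) {i : Fin S.n}
    (hi : S.A i = ∅) (h : Sat M s S.phiN0) : Sat M s (S.φ i) := by
  rw [StdFormula.phiN0, sat_bigAnd] at h
  exact h _ (List.mem_map_of_mem (List.mem_filter.2 ⟨List.mem_finRange i, by simpa using hi⟩))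

end Semantics

section ElemDisj

variable {Agent AP : Type}

-- For an elementary disjunction `γ`, the elementary conjunction equivalent to `¬γ`
-- (the third pattern is `φ.or ψ`).
def Formula.complConj : Formula Agent AP → Formula Agent AP
  | .atom p => (Formula.atom p).neg
  | .neg (.atom p) => .atom p
  | .neg (.and (.neg φ) (.neg ψ)) => φ.complConj.and ψ.complConj
  | _ => .top

variable {γ : Formula Agent AP} {M M' : AMAM Agent AP} {s : M.State} {s' : M'.State}

theorem IsElemDisj.posAtoms_complConj_subset (hγ : IsElemDisj γ) (h : ¬ Sat M s γ) :
    posAtoms γ.complConj ⊆ M.lab s := by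
  induction hγ with
  | bot => simp [Formula.bot, Formula.complConj, posAtoms]
  | lit hl =>
    cases hl with
    | pos p => simp [Formula.complConj, posAtoms]
    | neg p => simpa [Formula.complConj, posAtoms, Sat] using h
  | disj _ _ ih₁ ih₂ =>
    rw [sat_or, not_or] at h
    exact Set.union_subset (ih₁ h.1) (ih₂ h.2)

theorem IsElemDisj.not_sat_of_lab_mem_Icc (hγ : IsElemDisj γ) (h : ¬ Sat M s γ)
    (hlab : M'.lab s' ∈ Set.Icc (posAtoms γ.complConj) (M.lab s)) : ¬ Sat M' s' γ := by
  induction hγ with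
  | bot => simp [Formula.bot, Sat]
  | lit hl =>
    cases hl with
    | pos p => exact fun hp => h (hlab.2 hp)
    | neg p => simpa [Formula.complConj, posAtoms, Sat] using hlab.1
  | disj _ _ ih₁ ih₂ =>
    rw [sat_or, not_or] at h ⊢
    exact ⟨ih₁ h.1 ⟨(Set.subset_union_left).trans hlab.1, hlab.2⟩,
      ih₂ h.2 ⟨(Set.subset_union_right).trans hlab.1, hlab.2⟩⟩

end ElemDisj

namespace JA

variable {Agent α β : Type} {A : Set Agent}

def map (f : α → β) (σ : JA Agent α A) : JA Agent β A := fun a ha => f (σ a ha)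

theorem map_injective {f : α → β} (hf : Injective f) :
    Injective (map f : JA Agent α A → JA Agent β A) :=
  fun _ _ h => funext fun a => funext fun ha => hf (congrFun (congrFun h a) ha)

theorem restrict_map {B : Set Agent} (h : B ⊆ A) (f : α → β) (σ : JA Agent α A) :
    restrict h (map f σ) = map f (restrict h σ) := rfl

end JA

structure IsGCGMAt {Agent Act X : Type} (av : (A : Set Agent) → Set (JA Agent Act A))
    (out : (A : Set Agent) → JA Agent Act A → Set X) : Prop where
  av_restrict : ∀ A : Set Agent,
    av A = {σ | ∃ σG ∈ av Set.univ, JA.restrict (Set.subset_univ A) σG = σ}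
  av_univ : av Set.univ = {σ | out Set.univ σ ≠ ∅}
  out_union : ∀ (A : Set Agent) (σ : JA Agent Act A),
    out A σ = {x | ∃ σG, JA.restrict (Set.subset_univ A) σG = σ ∧ x ∈ out Set.univ σG}

section Local

variable {Agent AP ι α β X Y : Type}

theorem isGCGM_iff {M : AMAM Agent AP} :
    IsGCGM M ↔ ∀ s, IsGCGMAt (fun A => M.av A s) (fun A => M.out A s) :=
  ⟨fun h s => ⟨fun A => h.av_restrict A s, h.av_grand s, fun A => h.out_union A s⟩,
    fun h => ⟨fun A s => (h s).av_restrict A, fun s => (h s).av_univ,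
      fun A s => (h s).out_union A⟩⟩

theorem GameForm.isGCGMAt (F : GameForm Agent ι) : IsGCGMAt F.av0 F.out0 :=
  ⟨F.av0_restrict, Set.ext F.av0_out, F.out0_union⟩

theorem IsGCGMAt.map {av : (A : Set Agent) → Set (JA Agent α A)}
    {out : (A : Set Agent) → JA Agent α A → Set X} (h : IsGCGMAt av out) (f : α → β)
    (g : X → Y) :
    IsGCGMAt (fun A => {σ | ∃ τ ∈ av A, σ = JA.map f τ})
      (fun A σ => {t | ∃ τ, σ = JA.map f τ ∧ ∃ x ∈ out A τ, t = g x}) where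
  av_restrict A := by
    ext σ
    simp only [h.av_restrict A, Set.mem_ofPred_eq]
    constructor
    · rintro ⟨_, ⟨τG, hτG, rfl⟩, rfl⟩
      exact ⟨_, ⟨τG, hτG, rfl⟩, rfl⟩
    · rintro ⟨_, ⟨τG, hτG, rfl⟩, rfl⟩
      exact ⟨_, ⟨τG, hτG, rfl⟩, rfl⟩
  av_univ := by
    ext σ
    simp only [h.av_univ, Set.mem_ofPred_eq, ← Set.nonempty_iff_ne_empty]
    constructor
    · rintro ⟨τ, ⟨x, hx⟩, rfl⟩
      exact ⟨g x, τ, rfl, x, hx, rfl⟩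
    · rintro ⟨_, τ, rfl, x, hx, rfl⟩
      exact ⟨τ, ⟨x, hx⟩, rfl⟩
  out_union A σ := by
    ext t
    simp only [h.out_union A, Set.mem_ofPred_eq]
    constructor
    · rintro ⟨_, rfl, x, ⟨τG, rfl, hx⟩, rfl⟩
      exact ⟨JA.map f τG, rfl, τG, rfl, x, hx, rfl⟩
    · rintro ⟨_, rfl, τG, rfl, x, hx, rfl⟩
      exact ⟨_, rfl, x, ⟨τG, rfl, hx⟩, rfl⟩

theorem JA.exists_forall_map_iff {A : Set Agent} {f : α → β} (hf : Injective f)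
    (av : Set (JA Agent α A)) (out : JA Agent α A → Set X) (g : X → Y) (P : Y → Prop) :
    (∃ σ ∈ {σ | ∃ τ ∈ av, σ = JA.map f τ},
        ∀ t ∈ {t | ∃ τ, σ = JA.map f τ ∧ ∃ x ∈ out τ, t = g x}, P t) ↔
      ∃ τ ∈ av, ∀ x ∈ out τ, P (g x) := by
  constructor
  · rintro ⟨_, ⟨τ, hτ, rfl⟩, hP⟩
    exact ⟨τ, hτ, fun x hx => hP _ ⟨τ, rfl, x, hx, rfl⟩⟩
  · rintro ⟨τ, hτ, hP⟩
    refine ⟨_, ⟨τ, hτ, rfl⟩, ?_⟩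
    rintro _ ⟨τ', hτ', x, hx, rfl⟩
    exact hP x (JA.map_injective hf hτ' ▸ hx)

end Local

section Grafted

variable {Agent AP ι : Type} {Mi : ι → AMAM Agent AP} {si : (i : ι) → (Mi i).State}
  {γ : Formula Agent AP} {F : GameForm Agent ι}

theorem grafted_isGCGM (hMi : ∀ i, IsGCGM (Mi i)) : IsGCGM (grafted Mi si γ F) := by
  refine isGCGM_iff.2 fun s => ?_
  rcases s with _ | ⟨i, u⟩
  · exact F.isGCGMAt.map (β := (grafted Mi si γ F).Action) Sum.inl
      fun j => (some ⟨j, si j⟩ : (grafted Mi si γ F).State)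
  · exact (isGCGM_iff.1 (hMi i) u).map (fun x => (Sum.inr ⟨i, x⟩ : (grafted Mi si γ F).Action))
      fun u' => (some ⟨i, u'⟩ : (grafted Mi si γ F).State)

theorem sat_grafted_some (i : ι) (φ : Formula Agent AP) (u : (Mi i).State) :
    Sat (grafted Mi si γ F) (some ⟨i, u⟩) φ ↔ Sat (Mi i) u φ := by
  induction φ generalizing u with
  | top | atom => rfl
  | neg φ ih => exact not_congr (ih u)
  | and φ ψ ihφ ihψ => exact and_congr (ihφ u) (ihψ u)
  | coal A φ ih =>
    refine (JA.exists_forall_map_iff (f := fun x => (Sum.inr ⟨i, x⟩ : (grafted Mi si γ F).Action))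
      (fun _ _ h => eq_of_heq (Sigma.mk.inj_iff.1 (Sum.inr_injective h)).2) _ _ _ _).trans ?_
    exact exists_congr fun τ => and_congr_right fun _ => forall₂_congr fun u' _ => ih u'

theorem sat_grafted_none_coal (A : Set Agent) (φ : Formula Agent AP) :
    Sat (grafted Mi si γ F) none (.coal A φ) ↔
      ∃ τ ∈ F.av0 A, ∀ j ∈ F.out0 A τ, Sat (Mi j) (si j) φ := by
  refine (JA.exists_forall_map_iff Sum.inl_injective _ _ _ _).trans ?_
  exact exists_congr fun τ => and_congr_right fun _ =>
    forall₂_congr fun j _ => sat_grafted_some j φ (si j)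

end Grafted

section OfGrand

variable {Agent : Type}

def GameForm.ofGrand (Act ι : Type) [Nonempty Act] [Nonempty ι]
    (outU : JA Agent Act Set.univ → Set ι) : GameForm Agent ι where
  Action0 := Act
  action_nonempty := inferInstance
  outcome_nonempty := inferInstance
  av0 A := {σ | ∃ σG, (outU σG).Nonempty ∧ JA.restrict (Set.subset_univ A) σG = σ}
  out0 A σ := {j | ∃ σG, JA.restrict (Set.subset_univ A) σG = σ ∧ j ∈ outU σG}
  av0_restrict A := by
    ext σ
    constructor
    · rintro ⟨σG, hσG, rfl⟩
      exact ⟨σG, ⟨σG, hσG, rfl⟩, rfl⟩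
    · rintro ⟨σG, ⟨_, hσG, rfl⟩, rfl⟩
      exact ⟨_, hσG, rfl⟩
  av0_out σ := by
    rw [← Set.nonempty_iff_ne_empty]
    constructor
    · rintro ⟨_, ⟨j, hj⟩, rfl⟩
      exact ⟨j, _, rfl, hj⟩
    · rintro ⟨j, _, rfl, hj⟩
      exact ⟨_, ⟨j, hj⟩, rfl⟩
  out0_union A σ := by
    ext j
    constructor
    · rintro ⟨σG, rfl, hj⟩
      exact ⟨σG, rfl, σG, rfl, hj⟩
    · rintro ⟨σG, rfl, _, rfl, hj⟩
      exact ⟨_, rfl, hj⟩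

theorem GameForm.ofGrand_effective_iff {Act ι : Type} [Nonempty Act] [Nonempty ι]
    {outU : JA Agent Act Set.univ → Set ι} {A : Set Agent} {P : ι → Prop} :
    (∃ τ ∈ (GameForm.ofGrand Act ι outU).av0 A,
        ∀ j ∈ (GameForm.ofGrand Act ι outU).out0 A τ, P j) ↔
      ∃ σ, (outU σ).Nonempty ∧ ∀ σ', JA.restrict (Set.subset_univ A) σ' =
        JA.restrict (Set.subset_univ A) σ → ∀ j ∈ outU σ', P j := by
  constructor
  · rintro ⟨_, ⟨σ, hσ, rfl⟩, hP⟩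
    exact ⟨σ, hσ, fun σ' hσ' j hj => hP j ⟨σ', hσ', hj⟩⟩
  · rintro ⟨σ, hσ, hP⟩
    exact ⟨_, ⟨σ, hσ, rfl⟩, fun j ⟨σ', hσ', hj⟩ => hP σ' hσ' j hj⟩

end OfGrand

section Voting

variable {Agent ι : Type} (A : ι → Set Agent)

def Decides (v : Agent → Option ι) (i : ι) : Prop :=
  (A i).Nonempty ∧ ∀ a ∈ A i, v a = some i

variable {A}

theorem eq_of_decides_const {i i' : ι} (h : Decides A (fun _ => some i) i') : i = i' := by
  obtain ⟨⟨a, ha⟩, hv⟩ := h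
  exact Option.some_injective _ (hv a ha)

theorem Decides.congr {v w : Agent → Option ι} {i : ι} (h : Decides A v i)
    (hvw : ∀ a ∈ A i, w a = v a) : Decides A w i :=
  ⟨h.1, fun a ha => (hvw a ha).trans (h.2 a ha)⟩

theorem Decides.of_abstain {B : Set Agent} {v : Agent → Option ι} {i : ι}
    (h : Decides A (fun a => if a ∈ B then v a else none) i) : A i ⊆ B ∧ Decides A v i := by
  have hB : A i ⊆ B := fun a ha => by_contra fun haB => by simpa [haB] using h.2 a ha
  exact ⟨hB, h.congr fun a ha => by simp [hB ha]⟩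

theorem exists_subset_forall_decides_abstain {B : Set Agent} {v : Agent → Option ι} {i₁ i₀ : ι}
    (h₁ : ∀ i, Decides A v i → i₁ = i) (h₀ : A i₀ ⊆ B) :
    ∃ i, A i ⊆ B ∧ ∀ i', Decides A (fun a => if a ∈ B then v a else none) i' → i = i' := by
  by_cases hd : ∃ i, Decides A (fun a => if a ∈ B then v a else none) i
  · obtain ⟨i, hi⟩ := hd
    exact ⟨i, hi.of_abstain.1, fun i' hi' =>
      (h₁ i hi.of_abstain.2).symm.trans (h₁ i' hi'.of_abstain.2)⟩
  · exact ⟨i₀, h₀, fun i' hi' => (hd ⟨i', hi'⟩).elim⟩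

end Voting

namespace StdFormula

variable {Agent AP : Type} (S : StdFormula Agent AP)

abbrev Pair : Type := {p : Fin S.n × Fin S.m // S.A p.1 ⊆ S.B p.2}

def voteOutcome (v : JA Agent (Option (Fin S.n)) Set.univ) : Set (Option S.Pair) :=
  {o | ∃ k : S.Pair,
    (∀ i, Decides S.A (fun a => v a (Set.mem_univ a)) i → k.1.1 = i) ∧ some k = o}

-- The outcome `none` is never reached; it only makes the outcome type nonempty, also when `n = 0`.
noncomputable def voteGame : GameForm Agent (Option S.Pair) :=
  GameForm.ofGrand (Option (Fin S.n)) (Option S.Pair) S.voteOutcome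

variable {S} {Mi : Option S.Pair → AMAM Agent AP} {si : (o : Option S.Pair) → (Mi o).State}
  {δ : Formula Agent AP}

theorem sat_grafted_coal_antecedent
    (hN0 : ∀ k : S.Pair, Sat (Mi (some k)) (si (some k)) S.phiN0)
    (hφ : ∀ k : S.Pair, Sat (Mi (some k)) (si (some k)) (S.φ k.1.1)) (i : Fin S.n) :
    Sat (grafted Mi si δ S.voteGame) none (.coal (S.A i) (S.φ i)) := by
  obtain ⟨j₀, hj₀, -⟩ := S.hP
  rw [sat_grafted_none_coal, voteGame, GameForm.ofGrand_effective_iff]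
  refine ⟨fun _ _ => some i, ⟨_, ⟨(i, j₀), hj₀ ▸ Set.subset_univ _⟩,
    fun i' hi' => eq_of_decides_const hi', rfl⟩, ?_⟩
  rintro σ hσ _ ⟨k, hk, rfl⟩
  rcases (S.A i).eq_empty_or_nonempty with hA | hA
  · exact S.sat_φ_of_sat_phiN0 hA (hN0 k)
  · have hdec : Decides S.A (fun a => σ a (Set.mem_univ a)) i :=
      ⟨hA, fun a ha => congrFun (congrFun hσ a) ha⟩
    exact hk i hdec ▸ hφ k

theorem not_sat_grafted_coal_consequent
    (hψ : ∀ k : S.Pair, ¬ Sat (Mi (some k)) (si (some k)) (S.ψ k.1.2)) (j : Fin S.m) :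
    ¬ Sat (grafted Mi si δ S.voteGame) none (.coal (S.B j) (S.ψ j)) := by
  rw [sat_grafted_none_coal, voteGame, GameForm.ofGrand_effective_iff]
  rintro ⟨σ, ⟨_, ⟨k₁, hk₁, rfl⟩⟩, hσ⟩
  obtain ⟨i₀, hi₀, -⟩ := S.hN (Fin.pos k₁.1.1).ne'
  obtain ⟨i, hi, hdec⟩ :=
    exists_subset_forall_decides_abstain hk₁ (hi₀ ▸ Set.empty_subset (S.B j))
  let σ' : JA Agent (Option (Fin S.n)) Set.univ :=
    fun a _ => if a ∈ S.B j then σ a (Set.mem_univ a) else none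
  have hσ' :
      JA.restrict (Set.subset_univ (S.B j)) σ' = JA.restrict (Set.subset_univ (S.B j)) σ := by
    funext a ha
    simp [σ', JA.restrict, ha]
  exact hψ ⟨(i, j), hi⟩ (hσ σ' hσ' _ ⟨⟨(i, j), hi⟩, hdec, rfl⟩)

end StdFormula

theorem stmt15_general {Agent AP : Type}
    (S : StdFormula Agent AP) (h : MCLValid S.toFormula) :
    MCLValid S.γ ∨
    ∃ (i : Fin S.n) (j : Fin S.m), S.A i ⊆ S.B j ∧
      MCLValid ((S.phiN0.and (S.φ i)).imp (S.ψ j)) := by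
  by_contra! hcon
  obtain ⟨hγ, hij⟩ := hcon
  simp only [MCLValid, not_forall] at hγ hij
  obtain ⟨Mγ, hGγ, sγ, hsγ⟩ := hγ
  choose Mk hGk sk hk using fun k : S.Pair => hij k.1.1 k.1.2 k.2
  simp only [sat_imp, Sat, Classical.not_imp] at hk
  let Mi : Option S.Pair → AMAM Agent AP := fun o => o.elim Mγ Mk
  let si : (o : Option S.Pair) → (Mi o).State := fun | none => sγ | some k => sk k
  have hM : IsGCGM (grafted Mi si S.γ.complConj S.voteGame) :=
    grafted_isGCGM fun | none => hGγ | some k => hGk k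
  rcases S.sat_toFormula.1 (h _ hM none) with hγ₀ | himp
  · exact S.hγ.not_sat_of_lab_mem_Icc hsγ
      ⟨subset_rfl, S.hγ.posAtoms_complConj_subset hsγ⟩ hγ₀
  · obtain ⟨j, hj⟩ := himp (StdFormula.sat_grafted_coal_antecedent (fun k => (hk k).1.1)
      (fun k => (hk k).1.2))
    exact StdFormula.not_sat_grafted_coal_consequent (fun k => (hk k).2) j hj

/-- downward validity lemma for standard formulas. -/
theorem stmt15 {Agent AP : Type} [Fintype Agent] [Nonempty Agent] [Countable AP]
    (S : StdFormula Agent AP) (h : MCLValid S.toFormula) :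
    MCLValid S.γ ∨
    ∃ (i : Fin S.n) (j : Fin S.m), S.A i ⊆ S.B j ∧
      MCLValid ((S.phiN0.and (S.φ i)).imp (S.ψ j)) :=
  stmt15_general S h
end

section
/- Upward derivability lemma for standard formulas: let γ ∨ (⋀_{i∈N} ⟨A_i⟩φ_i → ⋁_{j∈P} ⟨B_j⟩ψ_j) be a standard formula, and assume that at least one of the following holds: (a) ⊢_MCL γ; (b) there exist i ∈ N and j ∈ P such that A_i ⊆ B_j and ⊢_MCL (φ_{N0} ∧ φ_i) → ψ_j, where N0 = {i ∈ N | A_i = ∅} and φ_{N0} = ⋀{φ_i | i ∈ N0}. Then ⊢_MCL γ ∨ (⋀_{i∈N} ⟨A_i⟩φ_i → ⋁_{j∈P} ⟨B_j⟩ψ_j). -/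
open scoped Classical

/-! Case (b) is a derivation under the antecedent `C` of the standard formula. As `N` is
nonempty there, condition (1) puts the conjunct `⟨∅⟩⊤` into `C`, so below `C` the rule R-CN
acts as necessitation for `⟨∅⟩`, and A-MG then makes every `⟨A⟩` monotone and lets it absorb a conjunct proved under `⟨∅⟩`.
This turns the conjuncts `⟨∅⟩φ_k` (`k ∈ N0`) and `⟨A_i⟩φ_i` of `C` into `⟨A_i⟩(φ_{N0} ∧ φ_i)`,
hence into `⟨A_i⟩ψ_j`, and A-MC lifts this to the disjunct `⟨B_j⟩ψ_j`. -/

namespace Formula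

variable {Agent AP : Type}

@[simp] lemma propEval_neg (v : Formula Agent AP → Bool) (φ : Formula Agent AP) :
    propEval v φ.neg = !propEval v φ := rfl

@[simp] lemma propEval_and (v : Formula Agent AP → Bool) (φ ψ : Formula Agent AP) :
    propEval v (φ.and ψ) = (propEval v φ && propEval v ψ) := rfl

@[simp] lemma propEval_or (v : Formula Agent AP → Bool) (φ ψ : Formula Agent AP) :
    propEval v (φ.or ψ) = (propEval v φ || propEval v ψ) := by
  simp [Formula.or]

@[simp] lemma propEval_imp (v : Formula Agent AP → Bool) (φ ψ : Formula Agent AP) :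
    propEval v (φ.imp ψ) = (!propEval v φ || propEval v ψ) := by
  simp [Formula.imp]

end Formula

open Formula

section Propositional

variable {Agent AP : Type}

lemma propEval_bigAnd (v : Formula Agent AP → Bool) :
    ∀ l : List (Formula Agent AP), propEval v (bigAnd l) = l.all (propEval v)
  | [] => rfl
  | [_] => by simp [bigAnd]
  | x :: y :: l => by simp [bigAnd, propEval_bigAnd v (y :: l)]

lemma propEval_bigOr (v : Formula Agent AP → Bool) :
    ∀ l : List (Formula Agent AP), propEval v (bigOr l) = l.any (propEval v)
  | [] => rfl
  | [_] => by simp [bigOr]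
  | x :: y :: l => by simp [bigOr, propEval_bigOr v (y :: l)]

lemma tautology_bigAnd_imp_of_mem {l : List (Formula Agent AP)} {φ : Formula Agent AP}
    (hφ : φ ∈ l) : Tautology ((bigAnd l).imp φ) := by
  intro v
  cases h : propEval v φ
  · have : l.all (propEval v) = false := by simpa using ⟨φ, hφ, h⟩
    simp [propEval_bigAnd, this]
  · simp [h]

lemma tautology_imp_bigOr_of_mem {l : List (Formula Agent AP)} {φ : Formula Agent AP}
    (hφ : φ ∈ l) : Tautology (φ.imp (bigOr l)) := by
  intro v
  cases h : propEval v φ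
  · simp [h]
  · have : l.any (propEval v) = true := List.any_eq_true.mpr ⟨φ, hφ, h⟩
    simp [propEval_bigOr, this]

end Propositional

namespace MCLProv

variable {Agent AP : Type} {C φ ψ χ : Formula Agent AP}

lemma mp_of_tautology (h : MCLProv φ) (t : Tautology (φ.imp ψ)) : MCLProv ψ :=
  mp (tau t) h

lemma imp_of_prov (h : MCLProv φ) : MCLProv (C.imp φ) :=
  h.mp_of_tautology fun v => by cases h : propEval v φ <;> simp [h]

lemma or_left (h : MCLProv φ) : MCLProv (φ.or ψ) :=
  h.mp_of_tautology fun v => by cases h : propEval v φ <;> simp [h]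

lemma or_right (h : MCLProv ψ) : MCLProv (φ.or ψ) :=
  h.mp_of_tautology fun v => by cases h : propEval v ψ <;> simp [h]

lemma imp_mp (h₁ : MCLProv (C.imp (φ.imp ψ))) (h₂ : MCLProv (C.imp φ)) :
    MCLProv (C.imp ψ) :=
  mp (mp (tau fun v => by
    simp only [propEval_imp]
    cases propEval v C <;> cases propEval v φ <;> cases propEval v ψ <;> rfl) h₁) h₂

lemma imp_trans (h₁ : MCLProv (C.imp φ)) (h₂ : MCLProv (φ.imp ψ)) : MCLProv (C.imp ψ) :=
  imp_mp (imp_of_prov h₂) h₁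

section UnderTop

variable (hTop : MCLProv (C.imp (coal (∅ : Set Agent) top)))
include hTop

lemma imp_coal_empty_of_prov (h : MCLProv χ) : MCLProv (C.imp (coal ∅ χ)) :=
  imp_trans hTop (cn ∅ top h)

lemma imp_coal_of_imp {A : Set Agent} (hφψ : MCLProv (φ.imp ψ))
    (h : MCLProv (C.imp (coal A φ))) : MCLProv (C.imp (coal A ψ)) :=
  imp_mp (imp_mp (imp_of_prov (mg A φ ψ)) (imp_coal_empty_of_prov hTop hφψ)) h

lemma imp_coal_and {A : Set Agent} (h₁ : MCLProv (C.imp (coal ∅ φ)))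
    (h₂ : MCLProv (C.imp (coal A ψ))) : MCLProv (C.imp (coal A (φ.and ψ))) := by
  have hpair : MCLProv (φ.imp (ψ.imp (φ.and ψ))) :=
    tau fun v => by
      simp only [propEval_imp, propEval_and]
      cases propEval v φ <;> cases propEval v ψ <;> rfl
  have h₃ : MCLProv (C.imp (coal ∅ (ψ.imp (φ.and ψ)))) := imp_coal_of_imp hTop hpair h₁
  exact imp_mp (imp_mp (imp_of_prov (mg A ψ (φ.and ψ))) h₃) h₂

lemma imp_coal_empty_bigAnd :
    ∀ l : List (Formula Agent AP), (∀ φ ∈ l, MCLProv (C.imp (coal ∅ φ))) →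
      MCLProv (C.imp (coal ∅ (bigAnd l)))
  | [], _ => hTop
  | [φ], hl => hl φ (List.mem_singleton_self φ)
  | φ :: ψ :: l, hl =>
    imp_coal_and hTop (hl φ List.mem_cons_self)
      (imp_coal_empty_bigAnd (ψ :: l) fun χ hχ => hl χ (List.mem_cons_of_mem φ hχ))

end UnderTop

end MCLProv

namespace StdFormula

variable {Agent AP : Type} (S : StdFormula Agent AP)

def antecedent : Formula Agent AP :=
  bigAnd (List.ofFn fun i => coal (S.A i) (S.φ i))

def consequent : Formula Agent AP :=
  bigOr (List.ofFn fun j => coal (S.B j) (S.ψ j))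

lemma toFormula_eq : S.toFormula = S.γ.or (S.antecedent.imp S.consequent) := rfl

lemma prov_toFormula_of_imp_coal (j : Fin S.m)
    (h : MCLProv (S.antecedent.imp (coal (S.B j) (S.ψ j)))) : MCLProv S.toFormula :=
  S.toFormula_eq ▸ MCLProv.or_right
    (h.imp_trans (MCLProv.tau (tautology_imp_bigOr_of_mem (List.mem_ofFn.mpr ⟨j, rfl⟩))))

lemma antecedent_imp_coal (i : Fin S.n) :
    MCLProv (S.antecedent.imp (coal (S.A i) (S.φ i))) :=
  MCLProv.tau (tautology_bigAnd_imp_of_mem (List.mem_ofFn.mpr ⟨i, rfl⟩))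

lemma antecedent_imp_coal_empty_top (hn : S.n ≠ 0) :
    MCLProv (S.antecedent.imp (coal (∅ : Set Agent) top)) := by
  obtain ⟨i, hA, hφ⟩ := S.hN hn
  simpa [hA, hφ] using S.antecedent_imp_coal i

lemma antecedent_imp_coal_empty_phiN0 (hn : S.n ≠ 0) :
    MCLProv (S.antecedent.imp (coal (∅ : Set Agent) S.phiN0)) := by
  refine MCLProv.imp_coal_empty_bigAnd (S.antecedent_imp_coal_empty_top hn) _ ?_
  simp only [List.mem_map, List.mem_filter, decide_eq_true_eq]
  rintro _ ⟨i, ⟨-, hA⟩, rfl⟩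
  simpa [hA] using S.antecedent_imp_coal i

end StdFormula

theorem stmt16_general {Agent AP : Type}
    (S : StdFormula Agent AP)
    (h : MCLProv S.γ ∨
      ∃ (i : Fin S.n) (j : Fin S.m), S.A i ⊆ S.B j ∧
        MCLProv ((S.phiN0.and (S.φ i)).imp (S.ψ j))) :
    MCLProv S.toFormula := by
  rcases h with hγ | ⟨i, j, hAB, hψ⟩
  · exact S.toFormula_eq ▸ hγ.or_left
  have hn : S.n ≠ 0 := i.pos.ne'
  have hTop := S.antecedent_imp_coal_empty_top hn
  have hAi : MCLProv (S.antecedent.imp (coal (S.A i) (S.phiN0.and (S.φ i)))) :=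
    MCLProv.imp_coal_and hTop (S.antecedent_imp_coal_empty_phiN0 hn) (S.antecedent_imp_coal i)
  have hBj : MCLProv (S.antecedent.imp (coal (S.B j) (S.ψ j))) :=
    (MCLProv.imp_coal_of_imp hTop hψ hAi).imp_trans (MCLProv.mc hAB _)
  exact S.prov_toFormula_of_imp_coal j hBj

/-- upward derivability lemma for standard formulas. -/
theorem stmt16 {Agent AP : Type} [Fintype Agent] [Nonempty Agent] [Countable AP]
    (S : StdFormula Agent AP)
    (h : MCLProv S.γ ∨
      ∃ (i : Fin S.n) (j : Fin S.m), S.A i ⊆ S.B j ∧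
        MCLProv ((S.phiN0.and (S.φ i)).imp (S.ψ j))) :
    MCLProv S.toFormula :=
  stmt16_general S h
end

section
/- Soundness of MCL: for every formula φ of the language Φ, if φ is derivable in the axiomatic system for MCL then φ is MCL-valid, i.e., true at every state of every general concurrent game model. -/
open scoped Classical

/-! Every axiom of MCL is valid on general concurrent game models and both rules preserve
validity. The modal axioms rest on two facts about such models: the available joint actions of
any coalition are the restrictions of available grand-coalition actions, which have nonempty
outcomes (Liveness, Conditional necessitation); and the outcomes of a joint action shrink when
it is extended to a larger coalition (Monotonicity of goals and of coalitions). -/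

lemma JA.eq_of_empty {Agent Action : Type} (σ τ : JA Agent Action ∅) : σ = τ := by
  funext _ ha
  exact absurd ha (Set.notMem_empty _)

namespace IsGCGM

variable {Agent AP : Type} {M : AMAM Agent AP} (hM : IsGCGM M)
include hM

lemma restrict_mem_av {s : M.State} {σG : JA Agent M.Action Set.univ} (hσG : σG ∈ M.av .univ s)
    (A : Set Agent) : JA.restrict (Set.subset_univ A) σG ∈ M.av A s := by
  rw [hM.av_restrict A s]
  exact ⟨σG, hσG, rfl⟩

lemma av_nonempty_of_av_nonempty {s : M.State} {A : Set Agent} (hA : (M.av A s).Nonempty)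
    (B : Set Agent) : (M.av B s).Nonempty := by
  obtain ⟨σA, hσA⟩ := hA
  rw [hM.av_restrict A s] at hσA
  obtain ⟨σG, hσG, -⟩ := hσA
  exact ⟨_, hM.restrict_mem_av hσG B⟩

lemma out_nonempty_of_mem_av {s : M.State} {A : Set Agent} {σ : JA Agent M.Action A}
    (hσ : σ ∈ M.av A s) : (M.out A s σ).Nonempty := by
  rw [hM.av_restrict A s] at hσ
  obtain ⟨σG, hσG, rfl⟩ := hσ
  rw [hM.av_grand s] at hσG
  obtain ⟨t, ht⟩ := Set.nonempty_iff_ne_empty.mpr hσG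
  exact ⟨t, by rw [hM.out_union A s]; exact ⟨σG, rfl, ht⟩⟩

lemma out_subset_out_restrict {s : M.State} {A B : Set Agent} (hAB : A ⊆ B)
    (σ : JA Agent M.Action B) : M.out B s σ ⊆ M.out A s (JA.restrict hAB σ) := by
  intro t ht
  rw [hM.out_union B s] at ht
  obtain ⟨σG, rfl, hσG⟩ := ht
  rw [hM.out_union A s]
  exact ⟨σG, rfl, hσG⟩

end IsGCGM

section Semantics

variable {Agent AP : Type} {M : AMAM Agent AP}

lemma Sat.imp_iff {s : M.State} {φ ψ : Formula Agent AP} :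
    Sat M s (φ.imp ψ) ↔ (Sat M s φ → Sat M s ψ) := by
  simp only [Formula.imp, Formula.or, Sat]
  tauto

lemma propEval_sat_iff (s : M.State) (φ : Formula Agent AP) :
    propEval (fun ψ => decide (Sat M s ψ)) φ = true ↔ Sat M s φ := by
  induction φ with
  | top => simp [propEval, Sat]
  | atom p => exact decide_eq_true_iff
  | neg φ ih => simp [propEval, Sat, ← ih]
  | and φ ψ ihφ ihψ => simp [propEval, Sat, ihφ, ihψ]
  | coal A φ => simp [propEval]

lemma Sat.of_tautology {φ : Formula Agent AP} (h : Tautology φ) (s : M.State) : Sat M s φ :=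
  (propEval_sat_iff s φ).mp (h _)

end Semantics

section Soundness

variable {Agent AP : Type}

lemma mclValid_of_tautology {φ : Formula Agent AP} (h : Tautology φ) : MCLValid φ :=
  fun _ _ s => Sat.of_tautology h s

lemma mclValid_mg (A : Set Agent) (φ ψ : Formula Agent AP) :
    MCLValid
      ((Formula.coal ∅ (φ.imp ψ)).imp ((Formula.coal A φ).imp (Formula.coal A ψ))) := by
  intro M hM s
  simp only [Sat.imp_iff]
  rintro ⟨σ0, -, hσ0⟩ ⟨σA, hσA, hφ⟩
  refine ⟨σA, hσA, fun t ht => ?_⟩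
  have ht0 : t ∈ M.out ∅ s σ0 := by
    rw [JA.eq_of_empty σ0 (JA.restrict (Set.empty_subset A) σA)]
    exact hM.out_subset_out_restrict _ σA ht
  exact Sat.imp_iff.mp (hσ0 t ht0) (hφ t ht)

lemma mclValid_mc {A B : Set Agent} (hAB : A ⊆ B) (φ : Formula Agent AP) :
    MCLValid ((Formula.coal A φ).imp (Formula.coal B φ)) := by
  intro M hM s
  rw [Sat.imp_iff]
  rintro ⟨σA, hσA, hφ⟩
  rw [hM.av_restrict A s] at hσA
  obtain ⟨σG, hσG, rfl⟩ := hσA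
  exact ⟨_, hM.restrict_mem_av hσG B,
    fun t ht => hφ t (hM.out_subset_out_restrict hAB _ ht)⟩

lemma mclValid_live (A : Set Agent) :
    MCLValid ((Formula.coal A Formula.bot).neg : Formula Agent AP) := by
  rintro M hM s ⟨σ, hσ, hbot⟩
  obtain ⟨t, ht⟩ := hM.out_nonempty_of_mem_av hσ
  exact hbot t ht trivial

lemma MCLValid.mp {φ ψ : Formula Agent AP} (hφψ : MCLValid (φ.imp ψ)) (hφ : MCLValid φ) :
    MCLValid ψ :=
  fun M hM s => Sat.imp_iff.mp (hφψ M hM s) (hφ M hM s)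

lemma MCLValid.cn {φ : Formula Agent AP} (hφ : MCLValid φ) (A : Set Agent)
    (ψ : Formula Agent AP) : MCLValid ((Formula.coal A ψ).imp (Formula.coal ∅ φ)) := by
  intro M hM s
  rw [Sat.imp_iff]
  rintro ⟨σ, hσ, -⟩
  obtain ⟨σ0, hσ0⟩ := hM.av_nonempty_of_av_nonempty ⟨σ, hσ⟩ ∅
  exact ⟨σ0, hσ0, fun t _ => hφ M hM t⟩

end Soundness

theorem stmt17_general {Agent AP : Type}
    (φ : Formula Agent AP) (h : MCLProv φ) : MCLValid φ := by
  induction h with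
  | tau hφ => exact mclValid_of_tautology hφ
  | mg A φ ψ => exact mclValid_mg A φ ψ
  | mc hAB φ => exact mclValid_mc hAB φ
  | live A => exact mclValid_live A
  | mp _ _ ihφψ ihφ => exact ihφψ.mp ihφ
  | cn A ψ _ ih => exact ih.cn A ψ

/-- soundness of MCL. -/
theorem stmt17 {Agent AP : Type} [Fintype Agent] [Nonempty Agent] [Countable AP]
    (φ : Formula Agent AP) (h : MCLProv φ) : MCLValid φ :=
  stmt17_general φ h
end

section
/- Completeness of MCL: for every formula φ of the language Φ, if φ is MCL-valid (true at every state of every general concurrent game model), then φ is derivable in the axiomatic system for MCL. -/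
open scoped Classical

/-!
Canonical model argument. States are maximal consistent sets, actions are votes `some ψ`
(or abstentions `none`). At `Γ` a grand joint action triggers `ψ` when a nonempty coalition
`B` with `⟨B⟩ψ ∈ Γ` unanimously votes `ψ`; it is available iff `⟨∅⟩⊤ ∈ Γ` and at most one
goal is triggered, and its outcomes are the maximal consistent sets containing `{φ | ⟨∅⟩φ ∈ Γ}`
and the triggered goal. Since (A-MG) and (R-CN) make `{φ | ⟨∅⟩φ ∈ Γ}` closed under derivation,
a coalition `A` can force `ψ` in this model exactly when `⟨A⟩ψ ∈ Γ`: the triggered goal `χ`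
comes with some `⟨B⟩χ ∈ Γ`, `B ⊆ A`, and `⟨∅⟩(χ → ψ) ∈ Γ`, which (A-MG) and (A-MC) turn into
`⟨A⟩ψ ∈ Γ`.
-/

namespace AMAM

variable {Agent AP State Action : Type} [Nonempty State] [Nonempty Action]
  (outG : State → JA Agent Action Set.univ → Set State) (lab : State → Set AP)

def ofGrandOutcome : AMAM Agent AP where
  State := State
  Action := Action
  state_nonempty := ‹_›
  action_nonempty := ‹_›
  av A s := {σ | ∃ σG, outG s σG ≠ ∅ ∧ JA.restrict (Set.subset_univ A) σG = σ}
  out A s σ := {t | ∃ σG, JA.restrict (Set.subset_univ A) σG = σ ∧ t ∈ outG s σG}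
  lab := lab

lemma ofGrandOutcome_out_univ (s : State) (σ : JA Agent Action Set.univ) :
    (ofGrandOutcome outG lab).out Set.univ s σ = outG s σ := by
  ext t
  exact ⟨fun ⟨_, hσ, h⟩ => hσ ▸ h, fun h => ⟨σ, rfl, h⟩⟩

lemma isGCGM_ofGrandOutcome : IsGCGM (ofGrandOutcome outG lab) where
  av_restrict A s := by
    ext σ
    exact exists_congr fun σG => and_congr_left fun _ =>
      ⟨fun h => ⟨σG, h, rfl⟩, fun ⟨_, h, hσG⟩ => hσG ▸ h⟩
  av_grand s := by
    ext σ
    have hout : (ofGrandOutcome outG lab).out Set.univ s σ = outG s σ :=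
      ofGrandOutcome_out_univ outG lab s σ
    rw [Set.mem_ofPred_eq, hout]
    exact ⟨fun ⟨_, h, hσ⟩ => hσ ▸ h, fun h => ⟨σ, h, rfl⟩⟩
  out_union A s σ := by
    ext t
    exact exists_congr fun σG => and_congr_right fun _ =>
      ⟨fun h => ⟨σG, rfl, h⟩, fun ⟨_, hσG, h⟩ => hσG ▸ h⟩

end AMAM

namespace JA

variable {Agent Action : Type} {A : Set Agent}

noncomputable def extendNone (A : Set Agent) (σ : JA Agent (Option Action) A) :
    JA Agent (Option Action) Set.univ :=
  fun a _ => if h : a ∈ A then σ a h else none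

lemma restrict_extendNone (σ : JA Agent (Option Action) A) :
    (extendNone A σ).restrict (Set.subset_univ A) = σ := by
  funext a ha
  exact dif_pos ha

lemma exists_mem_of_extendNone_eq_some {σ : JA Agent (Option Action) A} {a : Agent}
    {x : Action} (h : extendNone A σ a (Set.mem_univ a) = some x) :
    ∃ ha : a ∈ A, σ a ha = some x := by
  by_cases ha : a ∈ A
  · exact ⟨ha, by simpa only [extendNone, dif_pos ha] using h⟩
  · simp only [extendNone, dif_neg ha, reduceCtorEq] at h

end JA

namespace MCL

variable {Agent AP : Type}

section Tautologies

variable (a b c : Formula Agent AP)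

lemma tautology_top : Tautology (Formula.top : Formula Agent AP) := fun _ => rfl

lemma tautology_imp_self : Tautology (a.imp a) := by
  intro v; simp only [propEval, Formula.imp, Formula.or]
  cases propEval v a <;> rfl

lemma tautology_imp_imp_self : Tautology (a.imp (b.imp a)) := by
  intro v; simp only [propEval, Formula.imp, Formula.or]
  cases propEval v a <;> cases propEval v b <;> rfl

lemma tautology_imp_distrib :
    Tautology ((a.imp (b.imp c)).imp ((a.imp b).imp (a.imp c))) := by
  intro v; simp only [propEval, Formula.imp, Formula.or]
  cases propEval v a <;> cases propEval v b <;> cases propEval v c <;> rfl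

lemma tautology_imp_neg_imp_bot : Tautology (a.imp (a.neg.imp Formula.bot)) := by
  intro v; simp only [propEval, Formula.imp, Formula.or, Formula.bot]
  cases propEval v a <;> rfl

lemma tautology_neg_of_imp_bot : Tautology ((a.imp Formula.bot).imp a.neg) := by
  intro v; simp only [propEval, Formula.imp, Formula.or, Formula.bot]
  cases propEval v a <;> rfl

lemma tautology_of_neg_imp_bot : Tautology ((a.neg.imp Formula.bot).imp a) := by
  intro v; simp only [propEval, Formula.imp, Formula.or, Formula.bot]
  cases propEval v a <;> rfl

lemma tautology_and_imp_left : Tautology ((a.and b).imp a) := by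
  intro v; simp only [propEval, Formula.imp, Formula.or]
  cases propEval v a <;> cases propEval v b <;> rfl

lemma tautology_and_imp_right : Tautology ((a.and b).imp b) := by
  intro v; simp only [propEval, Formula.imp, Formula.or]
  cases propEval v a <;> cases propEval v b <;> rfl

lemma tautology_imp_imp_and : Tautology (a.imp (b.imp (a.and b))) := by
  intro v; simp only [propEval, Formula.imp, Formula.or]
  cases propEval v a <;> cases propEval v b <;> rfl

end Tautologies

inductive Derives (X : Set (Formula Agent AP)) : Formula Agent AP → Prop
  | hyp {φ : Formula Agent AP} : φ ∈ X → Derives X φ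
  | thm {φ : Formula Agent AP} : MCLProv φ → Derives X φ
  | mp {φ ψ : Formula Agent AP} : Derives X (φ.imp ψ) → Derives X φ → Derives X ψ

namespace Derives

variable {X Y : Set (Formula Agent AP)} {φ ψ : Formula Agent AP}

lemma tautology (h : Tautology φ) : Derives X φ := thm (MCLProv.tau h)

lemma mono (hXY : X ⊆ Y) (h : Derives X φ) : Derives Y φ := by
  induction h with
  | hyp hφ => exact hyp (hXY hφ)
  | thm hφ => exact thm hφ
  | mp _ _ ih₁ ih₂ => exact mp ih₁ ih₂

lemma imp_intro (h : Derives (insert φ X) ψ) : Derives X (φ.imp ψ) := by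
  induction h with
  | @hyp ψ hψ =>
    rcases hψ with rfl | hψ
    · exact tautology (tautology_imp_self ψ)
    · exact mp (tautology (tautology_imp_imp_self ψ φ)) (hyp hψ)
  | @thm ψ hψ => exact mp (tautology (tautology_imp_imp_self ψ φ)) (thm hψ)
  | mp _ _ ih₁ ih₂ => exact mp (mp (tautology (tautology_imp_distrib _ _ _)) ih₁) ih₂

lemma mclProv_of_empty (h : Derives (∅ : Set (Formula Agent AP)) φ) : MCLProv φ := by
  induction h with
  | hyp hφ => exact absurd hφ (Set.notMem_empty _)
  | thm hφ => exact hφ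
  | mp _ _ ih₁ ih₂ => exact MCLProv.mp ih₁ ih₂

lemma exists_mem_of_isChain_sUnion {c : Set (Set (Formula Agent AP))} (hc : IsChain (· ⊆ ·) c)
    (hne : c.Nonempty) (h : Derives (⋃₀ c) φ) : ∃ Y ∈ c, Derives Y φ := by
  induction h with
  | hyp hφ =>
    obtain ⟨Y, hY, hφY⟩ := hφ
    exact ⟨Y, hY, hyp hφY⟩
  | thm hφ => exact ⟨hne.some, hne.some_mem, thm hφ⟩
  | mp _ _ ih₁ ih₂ =>
    obtain ⟨Y₁, hY₁, h₁⟩ := ih₁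
    obtain ⟨Y₂, hY₂, h₂⟩ := ih₂
    rcases hc.total hY₁ hY₂ with h12 | h21
    · exact ⟨Y₂, hY₂, mp (h₁.mono h12) h₂⟩
    · exact ⟨Y₁, hY₁, mp h₁ (h₂.mono h21)⟩

end Derives

def Consistent (X : Set (Formula Agent AP)) : Prop := ¬ Derives X Formula.bot

lemma consistent_insert_of_not_derives {X : Set (Formula Agent AP)} {φ : Formula Agent AP}
    (h : ¬ Derives X φ) : Consistent (insert φ.neg X) := fun hbot =>
  h (.mp (.tautology (tautology_of_neg_imp_bot φ)) hbot.imp_intro)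

lemma exists_maximal_consistent_superset {X : Set (Formula Agent AP)} (hX : Consistent X) :
    ∃ Γ, X ⊆ Γ ∧ Maximal Consistent Γ :=
  zorn_subset_nonempty {Y | Consistent Y}
    (fun c hcons hc hne => ⟨⋃₀ c, fun hbot =>
      let ⟨_, hY, hYbot⟩ := Derives.exists_mem_of_isChain_sUnion hc hne hbot
      hcons hY hYbot, fun _ => Set.subset_sUnion_of_mem⟩) X hX

section MaximalConsistent

variable {X Γ : Set (Formula Agent AP)} {A B : Set Agent} {φ ψ χ : Formula Agent AP}

lemma mem_of_derives (hΓ : Maximal Consistent Γ) (h : Derives Γ φ) : φ ∈ Γ :=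
  hΓ.mem_of_prop_insert fun hbot => hΓ.prop (.mp hbot.imp_intro h)

lemma mem_of_mclProv (hΓ : Maximal Consistent Γ) (h : MCLProv φ) : φ ∈ Γ :=
  mem_of_derives hΓ (.thm h)

lemma mem_of_imp_mem (hΓ : Maximal Consistent Γ) (himp : φ.imp ψ ∈ Γ) (hφ : φ ∈ Γ) : ψ ∈ Γ :=
  mem_of_derives hΓ (.mp (.hyp himp) (.hyp hφ))

lemma neg_mem_iff (hΓ : Maximal Consistent Γ) : φ.neg ∈ Γ ↔ φ ∉ Γ := by
  refine ⟨fun hn hφ => hΓ.prop ?_, fun hφ => mem_of_derives hΓ ?_⟩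
  · exact .mp (.mp (.tautology (tautology_imp_neg_imp_bot φ)) (.hyp hφ)) (.hyp hn)
  · refine .mp (.tautology (tautology_neg_of_imp_bot φ)) (Derives.imp_intro ?_)
    by_contra hcons
    exact hφ (hΓ.mem_of_prop_insert hcons)

lemma and_mem_iff (hΓ : Maximal Consistent Γ) : φ.and ψ ∈ Γ ↔ φ ∈ Γ ∧ ψ ∈ Γ := by
  refine ⟨fun h => ⟨?_, ?_⟩, fun ⟨hφ, hψ⟩ => ?_⟩
  · exact mem_of_imp_mem hΓ (mem_of_mclProv hΓ (.tau (tautology_and_imp_left φ ψ))) h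
  · exact mem_of_imp_mem hΓ (mem_of_mclProv hΓ (.tau (tautology_and_imp_right φ ψ))) h
  · exact mem_of_imp_mem hΓ
      (mem_of_imp_mem hΓ (mem_of_mclProv hΓ (.tau (tautology_imp_imp_and φ ψ))) hφ) hψ

lemma derives_of_forall_maximal (h : ∀ Δ, X ⊆ Δ → Maximal Consistent Δ → φ ∈ Δ) :
    Derives X φ := by
  by_contra hφ
  obtain ⟨Δ, hXΔ, hΔ⟩ := exists_maximal_consistent_superset (consistent_insert_of_not_derives hφ)
  exact (neg_mem_iff hΔ).mp (hXΔ (Set.mem_insert _ _))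
    (h Δ ((Set.subset_insert _ _).trans hXΔ) hΔ)

def inevitable (Γ : Set (Formula Agent AP)) : Set (Formula Agent AP) :=
  {φ | Formula.coal ∅ φ ∈ Γ}

lemma coal_empty_top_mem (hΓ : Maximal Consistent Γ) (h : Formula.coal A ψ ∈ Γ) :
    Formula.coal ∅ Formula.top ∈ Γ :=
  mem_of_imp_mem hΓ (mem_of_mclProv hΓ (.cn A ψ (.tau tautology_top))) h

lemma coal_mem_of_coal_empty_imp_mem (hΓ : Maximal Consistent Γ)
    (himp : Formula.coal ∅ (χ.imp ψ) ∈ Γ) (h : Formula.coal B χ ∈ Γ) : Formula.coal B ψ ∈ Γ :=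
  mem_of_imp_mem hΓ (mem_of_imp_mem hΓ (mem_of_mclProv hΓ (.mg B χ ψ)) himp) h

lemma coal_empty_mem_of_derives (hΓ : Maximal Consistent Γ)
    (htop : Formula.coal ∅ Formula.top ∈ Γ) (h : Derives (inevitable Γ) φ) :
    Formula.coal ∅ φ ∈ Γ := by
  induction h with
  | hyp hφ => exact hφ
  | thm hφ => exact mem_of_imp_mem hΓ (mem_of_mclProv hΓ (.cn ∅ Formula.top hφ)) htop
  | mp _ _ ih₁ ih₂ => exact coal_mem_of_coal_empty_imp_mem hΓ ih₁ ih₂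

lemma consistent_insert_inevitable (hΓ : Maximal Consistent Γ) (h : Formula.coal B ψ ∈ Γ) :
    Consistent (insert ψ (inevitable Γ)) := fun hbot =>
  (neg_mem_iff hΓ).mp (mem_of_mclProv hΓ (.live B)) <| coal_mem_of_coal_empty_imp_mem hΓ
    (coal_empty_mem_of_derives hΓ (coal_empty_top_mem hΓ h) hbot.imp_intro) h

end MaximalConsistent

def MCS (Agent AP : Type) : Type := {Γ : Set (Formula Agent AP) // Maximal Consistent Γ}

/-- `B` must be nonempty: otherwise every `⟨∅⟩ψ ∈ Γ` would be triggered by every joint action. -/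
def triggered (Γ : Set (Formula Agent AP))
    (σ : JA Agent (Option (Formula Agent AP)) Set.univ) : Set (Formula Agent AP) :=
  {ψ | ∃ B : Set Agent, B.Nonempty ∧ Formula.coal B ψ ∈ Γ ∧
    ∀ a ∈ B, σ a (Set.mem_univ a) = some ψ}

lemma triggered_mono {Γ : Set (Formula Agent AP)}
    {σ σ' : JA Agent (Option (Formula Agent AP)) Set.univ}
    (h : ∀ a ψ, σ a (Set.mem_univ a) = some ψ → σ' a (Set.mem_univ a) = some ψ) :
    triggered Γ σ ⊆ triggered Γ σ' := fun _ ⟨B, hB, hBΓ, hvote⟩ =>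
  ⟨B, hB, hBΓ, fun a ha => h a _ (hvote a ha)⟩

/-- Without `⟨∅⟩⊤ ∈ Γ` the set `Γ` contains no `⟨A⟩ψ` at all, so nothing may be available. -/
def canonicalOutcome (Γ : MCS Agent AP) (σ : JA Agent (Option (Formula Agent AP)) Set.univ) :
    Set (MCS Agent AP) :=
  {Δ | Formula.coal ∅ Formula.top ∈ Γ.1 ∧ (triggered Γ.1 σ).Subsingleton ∧
    inevitable Γ.1 ⊆ Δ.1 ∧ triggered Γ.1 σ ⊆ Δ.1}

def canonicalModel [Nonempty (MCS Agent AP)] : AMAM Agent AP :=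
  AMAM.ofGrandOutcome canonicalOutcome fun Γ => {p | Formula.atom p ∈ Γ.1}

lemma exists_coal_of_triggered_extendNone {Γ : Set (Formula Agent AP)} {A : Set Agent}
    {σ : JA Agent (Option (Formula Agent AP)) A} (htop : Formula.coal ∅ Formula.top ∈ Γ)
    (hT : (triggered Γ (JA.extendNone A σ)).Subsingleton) :
    ∃ χ, ∃ B ⊆ A, Formula.coal B χ ∈ Γ ∧ triggered Γ (JA.extendNone A σ) ⊆ {χ} := by
  rcases (triggered Γ (JA.extendNone A σ)).eq_empty_or_nonempty with hempty | ⟨χ, hχ⟩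
  · exact ⟨Formula.top, ∅, Set.empty_subset A, htop, hempty ▸ Set.empty_subset _⟩
  · have hsingleton := hT.eq_singleton_of_mem hχ
    obtain ⟨B, -, hBΓ, hvote⟩ := hχ
    exact ⟨χ, B, fun a ha => (JA.exists_mem_of_extendNone_eq_some (hvote a ha)).1, hBΓ,
      hsingleton.subset⟩

variable [Nonempty (MCS Agent AP)]

lemma coal_mem_of_forall_outcome {Γ : MCS Agent AP} {A : Set Agent} {ψ : Formula Agent AP}
    {σ : JA Agent (Option (Formula Agent AP)) A} (hσ : σ ∈ canonicalModel.av A Γ)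
    (h : ∀ Δ ∈ canonicalModel.out A Γ σ, ψ ∈ Δ.1) : Formula.coal A ψ ∈ Γ.1 := by
  obtain ⟨σG, hσG, rfl⟩ := hσ
  obtain ⟨-, htop, hT, -, -⟩ := Set.nonempty_iff_ne_empty.mpr hσG
  set σ₀ := JA.extendNone A (σG.restrict (Set.subset_univ A))
  have hT₀ : (triggered Γ.1 σ₀).Subsingleton := hT.anti <|
    triggered_mono fun _ _ hx => (JA.exists_mem_of_extendNone_eq_some hx).2
  obtain ⟨χ, B, hBA, hB, hχ⟩ := exists_coal_of_triggered_extendNone htop hT₀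
  have hψ : Derives (insert χ (inevitable Γ.1)) ψ :=
    derives_of_forall_maximal fun Δ hΔ hmax => h ⟨Δ, hmax⟩
      ⟨σ₀, JA.restrict_extendNone _, htop, hT₀, (Set.subset_insert _ _).trans hΔ,
        hχ.trans (Set.singleton_subset_iff.mpr (hΔ (Set.mem_insert _ _)))⟩
  exact mem_of_imp_mem Γ.2 (mem_of_mclProv Γ.2 (.mc hBA ψ)) <|
    coal_mem_of_coal_empty_imp_mem Γ.2 (coal_empty_mem_of_derives Γ.2 htop hψ.imp_intro) hB

lemma exists_av_forall_outcome {Γ : MCS Agent AP} {A : Set Agent} {ψ : Formula Agent AP}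
    (h : Formula.coal A ψ ∈ Γ.1) :
    ∃ σ ∈ canonicalModel.av A Γ, ∀ Δ ∈ canonicalModel.out A Γ σ, ψ ∈ Δ.1 := by
  let σ : JA Agent (Option (Formula Agent AP)) A := fun _ _ => some ψ
  have htop := coal_empty_top_mem Γ.2 h
  have hT : triggered Γ.1 (JA.extendNone A σ) ⊆ {ψ} := by
    rintro χ ⟨B, ⟨b, hb⟩, -, hvote⟩
    obtain ⟨_, hb'⟩ := JA.exists_mem_of_extendNone_eq_some (hvote b hb)
    exact (Option.some.inj hb').symm
  obtain ⟨Δ, hΔ, hmax⟩ :=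
    exists_maximal_consistent_superset (consistent_insert_inevitable Γ.2 h)
  have hΔout : (⟨Δ, hmax⟩ : MCS Agent AP) ∈ canonicalOutcome Γ (JA.extendNone A σ) :=
    ⟨htop, Set.subsingleton_singleton.anti hT, (Set.subset_insert _ _).trans hΔ,
      hT.trans (Set.singleton_subset_iff.mpr (hΔ (Set.mem_insert _ _)))⟩
  refine ⟨σ, ⟨_, Set.nonempty_iff_ne_empty.mp ⟨_, hΔout⟩, JA.restrict_extendNone σ⟩, ?_⟩
  rintro Δ ⟨σG, hres, -, -, hinev, htrig⟩
  rcases A.eq_empty_or_nonempty with rfl | hA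
  · exact hinev h
  · exact htrig ⟨A, hA, h, fun a ha => congrFun (congrFun hres a) ha⟩

lemma sat_canonicalModel_iff (φ : Formula Agent AP) (Γ : MCS Agent AP) :
    Sat canonicalModel Γ φ ↔ φ ∈ Γ.1 := by
  induction φ generalizing Γ with
  | top => exact iff_of_true trivial (mem_of_mclProv Γ.2 (.tau tautology_top))
  | atom p => rfl
  | neg φ ih => exact (ih Γ).not.trans (neg_mem_iff Γ.2).symm
  | and φ ψ ihφ ihψ => exact (and_congr (ihφ Γ) (ihψ Γ)).trans (and_mem_iff Γ.2).symm
  | coal A ψ ih =>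
    refine ⟨fun ⟨_, hσ, h⟩ => coal_mem_of_forall_outcome hσ fun Δ hΔ => (ih Δ).mp (h Δ hΔ),
      fun hA => ?_⟩
    obtain ⟨σ, hσ, h⟩ := exists_av_forall_outcome hA
    exact ⟨σ, hσ, fun Δ hΔ => (ih Δ).mpr (h Δ hΔ)⟩

end MCL

theorem stmt18_general {Agent AP : Type} (φ : Formula Agent AP) (h : MCLValid φ) : MCLProv φ := by
  refine MCL.Derives.mclProv_of_empty (MCL.derives_of_forall_maximal fun Γ _ hΓ => ?_)
  have : Nonempty (MCL.MCS Agent AP) := ⟨⟨Γ, hΓ⟩⟩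
  exact (MCL.sat_canonicalModel_iff φ ⟨Γ, hΓ⟩).mp
    (h _ (AMAM.isGCGM_ofGrandOutcome _ _) _)

/-- completeness of MCL. -/
theorem stmt18 {Agent AP : Type} [Fintype Agent] [Nonempty Agent] [Countable AP]
    (φ : Formula Agent AP) (h : MCLValid φ) : MCLProv φ :=
  stmt18_general φ h
end
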